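/- Let X be a nonempty compact metric space, μ a finite Borel measure on X, and f, g : X → ℝ continuous. Then |∫_X normalize(f) dμ − ∫_X normalize(g) dμ| ≤ osc(f − g) · μ(X). -/

import Mathlib

open MeasureTheory Set

/-- The (attained) minimum of `f` on a nonempty compact space. -/
noncomputable def minF {X : Type*} (f : X → ℝ) : ℝ := sInf (Set.range f)

/-- The (attained) maximum of `f` on a nonempty compact space. -/
noncomputable def maxF {X : Type*} (f : X → ℝ) : ℝ := sSup (Set.range f)

/-- The oscillation `max f - min f`. -/
noncomputable def oscF {X : Type*} (f : X → ℝ) : ℝ := maxF f - minF f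

/-- `normalize f = f - min f`. -/
noncomputable def normF {X : Type*} (f : X → ℝ) : X → ℝ := fun x => f x - minF f

/-- The minimizer set of `f`. -/
def argminF {X : Type*} (f : X → ℝ) : Set X := {x | f x = minF f}

/-- The maximizer set of `f`. -/
def argmaxF {X : Type*} (f : X → ℝ) : Set X := {x | f x = maxF f}

/-! Since `f - g ≤ max (f - g)` pointwise, taking minima gives `min f - min g ≤ max (f - g)`,
and symmetrically `min (f - g) ≤ min f - min g`. Hence
`normalize f - normalize g = (f - g) - (min f - min g)` lies in `[-osc (f - g), osc (f - g)]`
pointwise, and integrating this bound gives the claim. -/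

section Extrema

variable {X : Type*} {f g : X → ℝ}

lemma minF_le (hf : BddBelow (range f)) (x : X) : minF f ≤ f x :=
  csInf_le hf (mem_range_self x)

lemma le_maxF (hf : BddAbove (range f)) (x : X) : f x ≤ maxF f :=
  le_csSup hf (mem_range_self x)

variable [Nonempty X]

lemma le_minF {c : ℝ} (h : ∀ x, c ≤ f x) : c ≤ minF f :=
  le_csInf (range_nonempty f) (forall_mem_range.2 h)

lemma minF_sub_minF_le_maxF_sub (hf : BddBelow (range f))
    (hd : BddAbove (range fun x => f x - g x)) :
    minF f - minF g ≤ maxF (fun x => f x - g x) := by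
  have : minF f - maxF (fun x => f x - g x) ≤ minF g :=
    le_minF fun x => by linarith [minF_le hf x, le_maxF hd x]
  linarith

lemma minF_sub_le_minF_sub_minF (hg : BddBelow (range g))
    (hd : BddBelow (range fun x => f x - g x)) :
    minF (fun x => f x - g x) ≤ minF f - minF g := by
  have : minF (fun x => f x - g x) + minF g ≤ minF f :=
    le_minF fun x => by linarith [minF_le hd x, minF_le hg x]
  linarith

lemma abs_normF_sub_normF_le_oscF_sub (hf : BddBelow (range f)) (hg : BddBelow (range g))
    (hd : BddBelow (range fun x => f x - g x)) (hd' : BddAbove (range fun x => f x - g x))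
    (x : X) : |normF f x - normF g x| ≤ oscF (fun x => f x - g x) := by
  have hmin := minF_sub_le_minF_sub_minF hg hd
  have hmax := minF_sub_minF_le_maxF_sub hf hd'
  rw [normF, normF, oscF, abs_le]
  constructor <;> linarith [minF_le hd x, le_maxF hd' x]

end Extrema

theorem stmt_4 {X : Type*} [MetricSpace X] [CompactSpace X] [Nonempty X]
    [MeasurableSpace X] [BorelSpace X]
    (μ : Measure X) [IsFiniteMeasure μ]
    (f g : X → ℝ) (hf : Continuous f) (hg : Continuous g) :
    |(∫ x, normF f x ∂μ) - ∫ x, normF g x ∂μ| ≤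
      oscF (fun x => f x - g x) * (μ Set.univ).toReal := by
  have integrable_normF {φ : X → ℝ} (hφ : Continuous φ) : Integrable (normF φ) μ :=
    (hφ.sub continuous_const).integrable_of_hasCompactSupport (.of_compactSpace _)
  have hd := isCompact_range (hf.sub hg)
  rw [← integral_sub (integrable_normF hf) (integrable_normF hg), ← Real.norm_eq_abs]
  exact norm_integral_le_of_norm_le_const <| .of_forall fun x =>
    abs_normF_sub_normF_le_oscF_sub (isCompact_range hf).bddBelow (isCompact_range hg).bddBelow
      hd.bddBelow hd.bddAbove x
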